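/- arXiv:math/0204225 — 3 statements merged into one kernel-verified Lean document; each statement's English description precedes it below -/
import Mathlib

section
/- For all natural numbers k and l there exists an injective continuous group homomorphism from the topological group (Fin k → Circle) × (Fin l → ℝ) into the real symplectic group Sp(2(k+l),ℝ) whose image is a closed subset of Sp(2(k+l),ℝ). -/
/-!
Each circle factor acts on its own coordinate plane `(eᵢ, fᵢ)` of `ℝ²⁽ᵏ⁺ˡ⁾` by the rotation
matrix of `z`, and each real factor by the shear `!![1, t; 0, 1]`. These `2 × 2` matrices have
determinant one, and a direct sum of `SL(2, ℝ)`-matrices acting on the planes `(eᵢ, fᵢ)` is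
symplectic. Rotations embed the compact circle, shears have the continuous left inverse
`M ↦ M 0 1`, so each factor is a closed embedding, and hence so is their direct sum.
-/

open Matrix Topology

namespace Matrix

variable {n R : Type*}

/-- The matrix acting by `A i` on the plane spanned by the `i`-th vectors of the two copies
of `n`. -/
def fromBlocksDiagonal [Zero R] [DecidableEq n] (A : n → Matrix (Fin 2) (Fin 2) R) :
    Matrix (n ⊕ n) (n ⊕ n) R :=
  fromBlocks (diagonal fun i => A i 0 0) (diagonal fun i => A i 0 1)
    (diagonal fun i => A i 1 0) (diagonal fun i => A i 1 1)

theorem isClosedEmbedding_fromBlocksDiagonal [Zero R] [DecidableEq n] [TopologicalSpace R]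
    [T2Space R] : IsClosedEmbedding (fromBlocksDiagonal : (n → Matrix (Fin 2) (Fin 2) R) → _) := by
  let diagonalBlocks (M : Matrix (n ⊕ n) (n ⊕ n) R) (i : n) : Matrix (Fin 2) (Fin 2) R :=
    !![M (.inl i) (.inl i), M (.inl i) (.inr i); M (.inr i) (.inl i), M (.inr i) (.inr i)]
  have continuous_diagonal_entry (a b : Fin 2) :
      Continuous fun A : n → Matrix (Fin 2) (Fin 2) R => diagonal fun i => A i a b :=
    (continuous_pi fun i => (continuous_apply_apply a b).comp (continuous_apply i)).matrix_diagonal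
  refine Function.LeftInverse.isClosedEmbedding (f := diagonalBlocks) (fun A => ?_) ?_
    ((continuous_diagonal_entry 0 0).matrix_fromBlocks (continuous_diagonal_entry 0 1)
      (continuous_diagonal_entry 1 0) (continuous_diagonal_entry 1 1))
  · ext i a b
    fin_cases a <;> fin_cases b <;> simp [diagonalBlocks, fromBlocksDiagonal]
  · exact continuous_pi fun i => continuous_matrix fun a b => by
      fin_cases a <;> fin_cases b <;> exact continuous_apply_apply _ _

variable [DecidableEq n] [Fintype n] [CommRing R]

theorem fromBlocksDiagonal_mul (A B : n → Matrix (Fin 2) (Fin 2) R) :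
    fromBlocksDiagonal (A * B) = fromBlocksDiagonal A * fromBlocksDiagonal B := by
  simp only [fromBlocksDiagonal, fromBlocks_multiply, diagonal_mul_diagonal, diagonal_add,
    Pi.mul_apply, mul_apply, Fin.sum_univ_two]

theorem fromBlocksDiagonal_mem_symplecticGroup {A : n → Matrix (Fin 2) (Fin 2) R}
    (hA : ∀ i, (A i).det = 1) : fromBlocksDiagonal A ∈ symplecticGroup n R := by
  simp only [det_fin_two] at hA
  rw [SymplecticGroup.mem_iff, J, fromBlocksDiagonal, fromBlocks_transpose, fromBlocks_multiply,
    fromBlocks_multiply]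
  congr 1 <;> ext i j <;> obtain rfl | hij := eq_or_ne i j <;> simp [*] <;> grind

end Matrix

theorem Matrix.isClosedEmbedding_transvection {n R : Type*} [DecidableEq n] [CommRing R]
    [TopologicalSpace R] [ContinuousAdd R] [T2Space R] {i j : n} (hij : i ≠ j) :
    IsClosedEmbedding (transvection i j : R → Matrix n n R) :=
  Function.LeftInverse.isClosedEmbedding (f := fun M => M i j)
    (fun c => by simp [transvection, hij]) (continuous_id.matrix_elem i j)
    (continuous_const.add (continuous_matrix fun a b => by
      simp only [single_apply]; exact continuous_id.if_const _ continuous_const))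

theorem Fin.append_mul_append {α : Type*} [Mul α] {m n : ℕ} (u u' : Fin m → α)
    (v v' : Fin n → α) : Fin.append (u * u') (v * v') = Fin.append u v * Fin.append u' v' := by
  ext p
  induction p using Fin.addCases <;> simp

namespace Circle

/-- The rotation matrix `!![re z, -im z; im z, re z]` of `z`. -/
noncomputable def toMatrix (z : Circle) : Matrix (Fin 2) (Fin 2) ℝ :=
  Algebra.leftMulMatrix Complex.basisOneI (z : ℂ)

theorem toMatrix_mul (z w : Circle) : (z * w).toMatrix = z.toMatrix * w.toMatrix := by
  simp [toMatrix]

theorem det_toMatrix (z : Circle) : z.toMatrix.det = 1 := by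
  rw [toMatrix, ← Algebra.norm_eq_matrix_det, Algebra.norm_complex_apply, normSq_coe]

theorem isClosedEmbedding_toMatrix : IsClosedEmbedding toMatrix := by
  refine Continuous.isClosedEmbedding ?_
    ((Algebra.leftMulMatrix_injective _).comp coe_injective)
  exact (LinearMap.continuous_of_finiteDimensional
    (Algebra.leftMulMatrix Complex.basisOneI).toLinearMap).comp continuous_subtype_val

end Circle

section RotationShear

variable {k l : ℕ}

noncomputable def rotationShearBlocks (x : (Fin k → Circle) × (Fin l → ℝ)) :
    Fin (k + l) → Matrix (Fin 2) (Fin 2) ℝ :=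
  Fin.append (fun i => (x.1 i).toMatrix) (fun j => transvection 0 1 (x.2 j))

theorem rotationShearBlocks_mul (a b : (Fin k → Circle) × (Fin l → ℝ)) :
    rotationShearBlocks (a.1 * b.1, a.2 + b.2) = rotationShearBlocks a * rotationShearBlocks b := by
  rw [rotationShearBlocks, rotationShearBlocks, rotationShearBlocks, ← Fin.append_mul_append]
  congr 1 <;> funext i
  · exact Circle.toMatrix_mul _ _
  · exact (transvection_mul_transvection_same 0 1 zero_ne_one _ _).symm

theorem det_rotationShearBlocks (x : (Fin k → Circle) × (Fin l → ℝ)) (p : Fin (k + l)) :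
    (rotationShearBlocks x p).det = 1 := by
  induction p using Fin.addCases <;>
    simp [rotationShearBlocks, Circle.det_toMatrix, det_transvection_of_ne]

theorem isClosedEmbedding_rotationShearBlocks :
    IsClosedEmbedding (rotationShearBlocks : (Fin k → Circle) × (Fin l → ℝ) → _) :=
  (Fin.appendHomeomorph k l).isClosedEmbedding.comp
    ((IsClosedEmbedding.piMap fun _ => Circle.isClosedEmbedding_toMatrix).prodMap
      (IsClosedEmbedding.piMap fun _ => isClosedEmbedding_transvection zero_ne_one))

end RotationShear

/-- For all `k l : ℕ` there exists an injective continuous group homomorphism from the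
topological group `(Fin k → Circle) × (Fin l → ℝ)` into the real symplectic group
`Sp(2(k+l),ℝ)` whose image is a closed subset of `Sp(2(k+l),ℝ)`.  (The group structure on the
source is multiplicative in the first factor and additive in the second.) -/
theorem torus_times_vector_embeds_in_symplecticGroup (k l : ℕ) :
    ∃ f : (Fin k → Circle) × (Fin l → ℝ) → Matrix.symplecticGroup (Fin (k + l)) ℝ,
      (∀ a b : (Fin k → Circle) × (Fin l → ℝ),
        f (a.1 * b.1, a.2 + b.2) = f a * f b) ∧
      Function.Injective f ∧ Continuous f ∧ IsClosed (Set.range f) := by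
  have hF : IsClosedEmbedding fun x : (Fin k → Circle) × (Fin l → ℝ) =>
      fromBlocksDiagonal (rotationShearBlocks x) :=
    isClosedEmbedding_fromBlocksDiagonal.comp isClosedEmbedding_rotationShearBlocks
  refine ⟨fun x => ⟨_, fromBlocksDiagonal_mem_symplecticGroup (det_rotationShearBlocks x)⟩,
    fun a b => Subtype.ext ?_, fun a b h => hF.injective (congrArg Subtype.val h),
    hF.continuous.subtype_mk _, ?_⟩
  · simp only [rotationShearBlocks_mul, fromBlocksDiagonal_mul]
    rfl
  · rw [← Set.preimage_image_eq (Set.range _) Subtype.val_injective, ← Set.range_comp]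
    exact hF.isClosed_range.preimage continuous_subtype_val
end

section
/- Let U ⊆ ℂ^n be a nonempty open connected set and let G be a countable group acting on U such that the action of each group element is analytic on a neighbourhood of each point of U (as a map into ℂ^n) and the action is faithful (every g ≠ e moves some point of U). Then there exists a point p ∈ U whose stabilizer is trivial, i.e. g·p = p implies g = e; moreover such points form a dense subset of U. -/
/-- Let `U ⊆ ℂ^n` be a nonempty open connected set and `G` a countable group acting on `U`
(via an action on `ℂ^n` preserving `U`) such that each group element acts by a map analytic in
a neighbourhood of each point of `U`, and the action is faithful on `U` (every `g ≠ 1` moves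
some point of `U`).  Then there exists `p ∈ U` with trivial stabilizer, and such points form a
dense subset of `U`. -/
theorem exists_point_with_trivial_stabilizer {n : ℕ} {G : Type*} [Group G] [Countable G]
    [MulAction G (Fin n → ℂ)] (U : Set (Fin n → ℂ)) (hU : IsOpen U) (hUne : U.Nonempty)
    (hUconn : IsConnected U) (hinv : ∀ g : G, ∀ x ∈ U, g • x ∈ U)
    (hanal : ∀ g : G, AnalyticOnNhd ℂ (fun x => g • x) U)
    (hfaithful : ∀ g : G, g ≠ 1 → ∃ x ∈ U, g • x ≠ x) :
    (∃ p ∈ U, ∀ g : G, g • p = p → g = 1) ∧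
      U ⊆ closure {p | p ∈ U ∧ ∀ g : G, g • p = p → g = 1} := by
  classical
  set S : Set (Fin n → ℂ) := {p | p ∈ U ∧ ∀ g : G, g • p = p → g = 1} with hSdef
  -- For g ≠ 1, the set of points of U moved by g is open and dense in U.
  have hW : ∀ g : G, g ≠ 1 →
      IsOpen {x | x ∈ U ∧ g • x ≠ x} ∧ U ⊆ closure {x | x ∈ U ∧ g • x ≠ x} := by
    intro g hg
    have hfa : AnalyticOnNhd ℂ (fun x => g • x - x) U :=
      (hanal g).sub analyticOnNhd_id
    constructor
    · rw [isOpen_iff_mem_nhds]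
      rintro x ⟨hxU, hxg⟩
      have hc : ContinuousAt (fun y => g • y - y) x := (hfa x hxU).continuousAt
      have h0 : (fun y => g • y - y) x ≠ 0 := sub_ne_zero.mpr hxg
      filter_upwards [hc.eventually_ne h0, hU.mem_nhds hxU] with y hy hyU
      exact ⟨hyU, sub_ne_zero.mp hy⟩
    · intro x hxU
      by_contra hx
      rw [mem_closure_iff] at hx
      push_neg at hx
      obtain ⟨V, hVo, hxV, hVdisj⟩ := hx
      have hev : (fun y => g • y - y) =ᶠ[nhds x] 0 := by
        filter_upwards [hVo.mem_nhds hxV, hU.mem_nhds hxU] with y hyV hyU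
        by_contra h
        exact Set.eq_empty_iff_forall_notMem.mp hVdisj y ⟨hyV, hyU, fun he => h (by simp [he])⟩
      have hzero := hfa.eqOn_zero_of_preconnected_of_eventuallyEq_zero
        hUconn.isPreconnected hxU hev
      obtain ⟨z, hzU, hz⟩ := hfaithful g hg
      exact hz (sub_eq_zero.mp (hzero hzU))
  -- Baire category argument in the whole space.
  set O : G → Set (Fin n → ℂ) := fun g =>
    (if g = 1 then U else {x | x ∈ U ∧ g • x ≠ x}) ∪ (closure U)ᶜ with hOdef
  have hOopen : ∀ g, IsOpen (O g) := by
    intro g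
    by_cases hg : g = 1
    · simp only [hOdef, hg, if_pos rfl]
      exact hU.union isClosed_closure.isOpen_compl
    · simp only [hOdef, if_neg hg]
      exact ((hW g hg).1).union isClosed_closure.isOpen_compl
  have hOdense : ∀ g, Dense (O g) := by
    intro g
    intro x
    by_cases hxc : x ∈ closure U
    · have hxcW : x ∈ closure (if g = 1 then U else {x | x ∈ U ∧ g • x ≠ x}) := by
        by_cases hg : g = 1
        · simpa [hg] using hxc
        · rw [if_neg hg]
          have h2 := closure_mono (hW g hg).2 hxc
          rwa [closure_closure] at h2
      exact closure_mono Set.subset_union_left hxcW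
    · exact subset_closure (Set.mem_union_right _ hxc)
  have hdense : Dense (⋂ g, O g) := dense_iInter_of_isOpen hOopen hOdense
  have hsub : U ∩ ⋂ g, O g ⊆ S := by
    rintro x ⟨hxU, hxO⟩
    refine ⟨hxU, fun g hgx => ?_⟩
    by_contra hg
    have := Set.mem_iInter.mp hxO g
    rw [hOdef] at this
    simp only [if_neg hg] at this
    rcases this with h | h
    · exact h.2 hgx
    · exact h (subset_closure hxU)
  have hUclos : U ⊆ closure S := by
    intro x hxU
    have := hdense.open_subset_closure_inter hU
    exact closure_mono hsub (this hxU)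
  refine ⟨?_, hUclos⟩
  obtain ⟨x, hxU⟩ := hUne
  have : (closure S).Nonempty := ⟨x, hUclos hxU⟩
  obtain ⟨p, hpU, hp⟩ := (closure_nonempty_iff.mp this)
  exact ⟨p, hpU, hp⟩
end

section
/- Let U ⊆ ℂ^n be a nonempty open connected set and let f : ℂ^n → ℂ be analytic on a neighbourhood of each point of U. If f is not identically zero on U (there exists x ∈ U with f(x) ≠ 0), then the zero set {x ∈ U : f(x) = 0} has Lebesgue measure zero, where ℂ^n is identified with ℝ^{2n} and equipped with its Lebesgue (volume) measure. -/
/-!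
Induction on the dimension, through Fubini. In one variable the zeros of an analytic function
that does not vanish identically are isolated, so its zero set is null for every measure without
atoms. On a product `E × F` nullity is a local property, so it suffices to look at a rectangle
`A ×ˢ D` of preconnected open sets on which `g` does not vanish identically, say `g (y₀, t₀) ≠ 0`.
The `y` with `g (y, t₀) = 0` form a null set, and for every other `y ∈ A` the slice
`t ↦ g (y, t)` is a nonzero analytic function on `D`, whose zeros form a null set. Haar measures
on finite-dimensional spaces are mutually absolutely continuous, so the statement transports
along the linear isomorphisms `𝕜ⁿ⁺¹ ≃ 𝕜ⁿ × 𝕜` and `E ≃ 𝕜ⁿ`.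
-/

open MeasureTheory

noncomputable instance (n : ℕ) : MeasurableSpace (EuclideanSpace ℂ (Fin n)) := borel _
instance (n : ℕ) : BorelSpace (EuclideanSpace ℂ (Fin n)) := ⟨rfl⟩

open Measure Set Filter Topology

section NontriviallyNormedField

variable {𝕜 E F G : Type*} [NontriviallyNormedField 𝕜]
  [NormedAddCommGroup E] [NormedSpace 𝕜 E] [NormedAddCommGroup F] [NormedSpace 𝕜 F]
  [NormedAddCommGroup G] [NormedSpace 𝕜 G]

theorem AnalyticOnNhd.frequently_ne_zero {f : E → G} {U : Set E} {z : E}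
    (hf : AnalyticOnNhd 𝕜 f U) (hU : IsPreconnected U) (hne : ∃ x ∈ U, f x ≠ 0) (hz : z ∈ U) :
    ∃ᶠ x in 𝓝 z, f x ≠ 0 := fun hzero ↦ by
  obtain ⟨x, hx, hfx⟩ := hne
  exact hfx <| hf.eqOn_zero_of_preconnected_of_eventuallyEq_zero hU hz
    (hzero.mono fun _ ↦ not_not.1) hx

theorem ContinuousOn.measurableSet_setOf_mem_and_eq {α β : Type*} [TopologicalSpace α]
    [MeasurableSpace α] [OpensMeasurableSpace α] [TopologicalSpace β] [T1Space β]
    {f : α → β} {U : Set α} (hf : ContinuousOn f U) (hU : IsOpen U) (b : β) :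
    MeasurableSet {x | x ∈ U ∧ f x = b} := by
  have hopen : IsOpen (U ∩ f ⁻¹' {b}ᶜ) := hf.isOpen_inter_preimage hU isOpen_compl_singleton
  convert hU.measurableSet.diff hopen.measurableSet using 1
  ext x
  simp [and_comm]

variable (𝕜 G) in
def AnalyticZeroSetsNull [MeasurableSpace E] (μ : Measure E) : Prop :=
  ∀ ⦃U : Set E⦄, IsOpen U → IsPreconnected U → ∀ ⦃f : E → G⦄, AnalyticOnNhd 𝕜 f U →
    (∃ x ∈ U, f x ≠ 0) → μ {x | x ∈ U ∧ f x = 0} = 0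

theorem analyticZeroSetsNull_of_nullSingletonClass [MeasurableSpace 𝕜] [SecondCountableTopology 𝕜]
    (μ : Measure 𝕜) [NullSingletonClass μ] : AnalyticZeroSetsNull 𝕜 G μ := by
  intro U _ hU f hf hne
  refine measure_null_of_locally_null _ fun z hz ↦ ⟨{z}, ?_, measure_singleton z⟩
  rcases (hf z hz.1).eventually_eq_zero_or_eventually_ne_zero with hzero | hisolated
  · obtain ⟨x, hfx, hfx'⟩ := ((hf.frequently_ne_zero hU hne hz.1).and_eventually hzero).exists
    exact absurd hfx' hfx
  · rw [eventually_nhdsWithin_iff] at hisolated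
    exact mem_nhdsWithin_iff_eventually.2 <|
      hisolated.mono fun x hx hxZ ↦ by_contra fun hxz ↦ hx hxz hxZ.2

theorem AnalyticZeroSetsNull.of_quasiMeasurePreserving [MeasurableSpace E] [MeasurableSpace F]
    {μ : Measure E} {ν : Measure F} (e : E ≃L[𝕜] F) (he : QuasiMeasurePreserving e μ ν)
    (h : AnalyticZeroSetsNull 𝕜 G ν) : AnalyticZeroSetsNull 𝕜 G μ := by
  intro U hU hUc f hf hne
  have hzero : {x | x ∈ U ∧ f x = 0} = e ⁻¹' {y | y ∈ e '' U ∧ f (e.symm y) = 0} := by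
    ext x
    simp
  rw [hzero]
  refine he.preimage_null <|
    h (e.toHomeomorph.isOpenMap U hU) (hUc.image e e.continuous.continuousOn) ?_ ?_
  · rintro _ ⟨x, hx, rfl⟩
    exact (hf x hx).comp_of_eq (e.symm.analyticAt _) (e.symm_apply_apply x)
  · obtain ⟨x, hx, hfx⟩ := hne
    exact ⟨e x, mem_image_of_mem e hx, by simpa using hfx⟩

section Prod

variable [MeasurableSpace E] [OpensMeasurableSpace E] [MeasurableSpace F] [OpensMeasurableSpace F]
  {μ : Measure E} {ν : Measure F}

theorem AnalyticZeroSetsNull.measure_prod_setOf_mem_prod_and_eq_zero [SecondCountableTopology F]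
    (hμ : AnalyticZeroSetsNull 𝕜 G μ) (hν : AnalyticZeroSetsNull 𝕜 G ν)
    {A : Set E} {D : Set F} (hA : IsOpen A) (hAc : IsPreconnected A) (hD : IsOpen D)
    (hDc : IsPreconnected D) {g : E × F → G} (hg : AnalyticOnNhd 𝕜 g (A ×ˢ D))
    (hne : ∃ p ∈ A ×ˢ D, g p ≠ 0) :
    μ.prod ν {p | p ∈ A ×ˢ D ∧ g p = 0} = 0 := by
  obtain ⟨⟨y₀, t₀⟩, ⟨hy₀, ht₀⟩, hg₀⟩ := hne
  have hS : μ {y | y ∈ A ∧ g (y, t₀) = 0} = 0 :=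
    hμ hA hAc (f := fun y ↦ g (y, t₀)) (fun y hy ↦ (hg (y, t₀) ⟨hy, ht₀⟩).curry_left)
      ⟨y₀, hy₀, hg₀⟩
  refine measure_prod_null_of_ae_null
    (hg.continuousOn.measurableSet_setOf_mem_and_eq (hA.prod hD) 0) ?_
  filter_upwards [measure_eq_zero_iff_ae_notMem.1 hS] with y hy
  by_cases hyA : y ∈ A
  · refine measure_mono_null ?_ <|
      hν hD hDc (f := fun t ↦ g (y, t)) (fun t ht ↦ (hg (y, t) ⟨hyA, ht⟩).curry_right)
        ⟨t₀, ht₀, fun h ↦ hy ⟨hyA, h⟩⟩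
    exact fun t ht ↦ ⟨ht.1.2, ht.2⟩
  · exact measure_mono_null (fun t ht ↦ hyA ht.1.1) measure_empty

theorem AnalyticZeroSetsNull.prod [SecondCountableTopology E] [SecondCountableTopology F]
    [LocallyConnectedSpace E] [LocallyConnectedSpace F]
    (hμ : AnalyticZeroSetsNull 𝕜 G μ) (hν : AnalyticZeroSetsNull 𝕜 G ν) :
    AnalyticZeroSetsNull 𝕜 G (μ.prod ν) := by
  intro W hW hWc g hg hne
  refine measure_null_of_locally_null _ fun z hz ↦ ?_
  obtain ⟨⟨A, D⟩, ⟨⟨hA, hzA, hAc⟩, ⟨hD, hzD, hDc⟩⟩, hAD⟩ :=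
    ((LocallyConnectedSpace.open_connected_basis z.1).prod_nhds
      (LocallyConnectedSpace.open_connected_basis z.2)).mem_iff.1 (hW.mem_nhds hz.1)
  have hAD_nhds : A ×ˢ D ∈ 𝓝 z := (hA.prod hD).mem_nhds (mem_prod.2 ⟨hzA, hzD⟩)
  refine ⟨_, inter_mem_nhdsWithin _ hAD_nhds, measure_mono_null ?_ <|
    hμ.measure_prod_setOf_mem_prod_and_eq_zero hν hA hAc.isPreconnected hD hDc.isPreconnected
      (hg.mono hAD) ?_⟩
  · exact fun p hp ↦ ⟨hp.2, hp.1.2⟩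
  · obtain ⟨p, hgp, hp⟩ := ((hg.frequently_ne_zero hWc hne hz.1).and_eventually hAD_nhds).exists
    exact ⟨p, hp, hgp⟩

end Prod

end NontriviallyNormedField

section RCLike

variable {𝕜 E F G : Type*} [RCLike 𝕜]
  [NormedAddCommGroup E] [NormedSpace 𝕜 E] [NormedAddCommGroup F] [NormedSpace 𝕜 F]
  [NormedAddCommGroup G] [NormedSpace 𝕜 G]

theorem ContinuousLinearEquiv.quasiMeasurePreserving_of_isAddHaarMeasure [FiniteDimensional 𝕜 F]
    [MeasurableSpace E] [BorelSpace E] [MeasurableSpace F] [BorelSpace F]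
    (e : E ≃L[𝕜] F) (μ : Measure E) [μ.IsAddHaarMeasure] (ν : Measure F) [ν.IsAddHaarMeasure] :
    QuasiMeasurePreserving e μ ν :=
  have := FiniteDimensional.proper_rclike 𝕜 F
  ⟨e.continuous.measurable, absolutelyContinuous_isAddHaarMeasure _ _⟩

theorem analyticZeroSetsNull_addHaar_pi [MeasurableSpace 𝕜] [BorelSpace 𝕜] (n : ℕ) :
    AnalyticZeroSetsNull 𝕜 G (addHaar : Measure (Fin n → 𝕜)) := by
  induction n with
  | zero =>
    rintro U - - f - ⟨x, -, hfx⟩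
    convert measure_empty (μ := (addHaar : Measure (Fin 0 → 𝕜)))
    ext y
    simp [Subsingleton.elim y x, hfx]
  | succ n ih =>
    let e : (Fin (n + 1) → 𝕜) ≃L[𝕜] (Fin n → 𝕜) × 𝕜 :=
      ContinuousLinearEquiv.ofFinrankEq (by simp)
    exact (ih.prod (analyticZeroSetsNull_of_nullSingletonClass addHaar)).of_quasiMeasurePreserving
      e (e.quasiMeasurePreserving_of_isAddHaarMeasure _ _)

theorem AnalyticOnNhd.addHaar_setOf_mem_and_eq_zero [FiniteDimensional 𝕜 E] [MeasurableSpace E]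
    [BorelSpace E] (μ : Measure E) [μ.IsAddHaarMeasure] {U : Set E} {f : E → G}
    (hf : AnalyticOnNhd 𝕜 f U) (hU : IsOpen U) (hUc : IsPreconnected U)
    (hne : ∃ x ∈ U, f x ≠ 0) : μ {x | x ∈ U ∧ f x = 0} = 0 := by
  let : MeasurableSpace 𝕜 := borel 𝕜
  have : BorelSpace 𝕜 := ⟨rfl⟩
  let e : E ≃L[𝕜] (Fin (Module.finrank 𝕜 E) → 𝕜) := ContinuousLinearEquiv.ofFinrankEq (by simp)
  exact (analyticZeroSetsNull_addHaar_pi _).of_quasiMeasurePreserving e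
    (e.quasiMeasurePreserving_of_isAddHaarMeasure _ _) hU hUc hf hne

end RCLike

theorem zeroSet_measure_zero_of_analytic_general {n : ℕ} (U : Set (EuclideanSpace ℂ (Fin n)))
    (hU : IsOpen U) (hUconn : IsConnected U)
    (f : EuclideanSpace ℂ (Fin n) → ℂ) (hf : AnalyticOnNhd ℂ f U)
    (hne : ∃ x ∈ U, f x ≠ 0) :
    volume {x | x ∈ U ∧ f x = 0} = 0 :=
  hf.addHaar_setOf_mem_and_eq_zero volume hU hUconn.isPreconnected hne

/-- Let `U ⊆ ℂ^n` be a nonempty open connected set and `f : ℂ^n → ℂ` analytic in a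
neighbourhood of each point of `U`.  If `f` is not identically zero on `U`, then the zero set
`{x ∈ U | f x = 0}` has Lebesgue measure zero (where `ℂ^n = EuclideanSpace ℂ (Fin n)` is
identified with `ℝ^{2n}` and carries its volume measure). -/
theorem zeroSet_measure_zero_of_analytic {n : ℕ} (U : Set (EuclideanSpace ℂ (Fin n)))
    (hU : IsOpen U) (hUne : U.Nonempty) (hUconn : IsConnected U)
    (f : EuclideanSpace ℂ (Fin n) → ℂ) (hf : AnalyticOnNhd ℂ f U)
    (hne : ∃ x ∈ U, f x ≠ 0) :
    volume {x | x ∈ U ∧ f x = 0} = 0 :=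
  zeroSet_measure_zero_of_analytic_general U hU hUconn f hf hne
end
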